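/- arXiv:math/0407456 — 4 statements merged into one kernel-verified Lean document; each statement's English description precedes it below -/
import Mathlib

section
/- Let A be a finite tree with a tricoloring (B, R, G) satisfying: B, G, and the endpoints of edges in R partition the vertices; edges of R are pairwise non-adjacent; every edge with one endpoint in G has the other endpoint in B; every vertex of B has at least two neighbors in G. Then every vertex of G is optional, i.e., for each g in G there exists a maximum matching of A no edge of which has g as an endpoint. -/
variable {V : Type*} [Fintype V] [DecidableEq V]

/-- `C` is a vertex cover of `A`. -/
def IsVC (A : SimpleGraph V) (C : Set V) : Prop :=
  ∀ e ∈ A.edgeSet, ∃ v ∈ C, v ∈ e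

/-- `C` is a minimum vertex cover of `A`. -/
def IsMinVC (A : SimpleGraph V) (C : Set V) : Prop :=
  IsVC A C ∧ ∀ D : Set V, IsVC A D → C.ncard ≤ D.ncard

/-- `M` is a matching of `A`: a set of edges, pairwise non-adjacent. -/
def IsMatch (A : SimpleGraph V) (M : Set (Sym2 V)) : Prop :=
  M ⊆ A.edgeSet ∧ ∀ e ∈ M, ∀ f ∈ M, e ≠ f → ∀ v : V, ¬(v ∈ e ∧ v ∈ f)

/-- `M` is a maximum matching of `A`. -/
def IsMaxMatch (A : SimpleGraph V) (M : Set (Sym2 V)) : Prop :=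
  IsMatch A M ∧ ∀ N : Set (Sym2 V), IsMatch A N → N.ncard ≤ M.ncard

/-- endpoints of a set of edges -/
def Rsupp (R : Set (Sym2 V)) : Set V := {v | ∃ e ∈ R, v ∈ e}

/-- the tricoloring conditions (iii) of the paper -/
def IsBColoring (A : SimpleGraph V) (B : Set V) (R : Set (Sym2 V)) (G : Set V) : Prop :=
  R ⊆ A.edgeSet ∧
  B ∪ G ∪ Rsupp R = Set.univ ∧
  Disjoint B G ∧ Disjoint B (Rsupp R) ∧ Disjoint G (Rsupp R) ∧
  (∀ e ∈ R, ∀ f ∈ R, e ≠ f → ∀ v : V, ¬(v ∈ e ∧ v ∈ f)) ∧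
  (∀ v w : V, A.Adj v w → v ∈ G → w ∈ B) ∧
  (∀ b ∈ B, 2 ≤ (A.neighborSet b ∩ G).ncard)

/-- positive vertex-cover backbone -/
def PosBB (A : SimpleGraph V) : Set V := {v | ∀ C : Set V, IsMinVC A C → v ∈ C}

/-- negative vertex-cover backbone -/
def NegBB (A : SimpleGraph V) : Set V := {v | ∀ C : Set V, IsMinVC A C → v ∉ C}

/-- degenerate vertex -/
def Degen (A : SimpleGraph V) (v : V) : Prop :=
  (∃ C : Set V, IsMinVC A C ∧ v ∈ C) ∧ (∃ C : Set V, IsMinVC A C ∧ v ∉ C)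

/-- exclusive edge -/
def Exclusive (A : SimpleGraph V) (e : Sym2 V) : Prop :=
  e ∈ A.edgeSet ∧ (∀ v ∈ e, Degen A v) ∧
  ∀ C : Set V, IsMinVC A C → ∃ v ∈ e, v ∉ C

/-!
Root the tree at `g`. A blue vertex `b` has two green neighbours and at most one neighbour closer
to `g`, so it has a green child `F b`; since a vertex has only one parent, `F` is injective. Then
`R` together with the edges `b — F b` is a matching of size `|R| + |B|` missing `g`, which is
neither blue, a child, nor an endpoint of `R`. It is maximum: a matching has at most `|B|` edges
meeting `B`, and its other edges avoid `G` too (green vertices only have blue neighbours), so they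
lie inside the `2|R|` endpoints of `R`.
-/

section Matching

variable {V : Type*} {A : SimpleGraph V} {M N : Set (Sym2 V)}

lemma IsMatch.ncard_rsupp [Fintype V] (hM : IsMatch A M) : (Rsupp M).ncard = 2 * M.ncard := by
  classical
  have hsupp : Rsupp M = ↑(M.toFinset.biUnion Sym2.toFinset) := by ext v; simp [Rsupp]
  have hdisj : (M.toFinset : Set (Sym2 V)).PairwiseDisjoint Sym2.toFinset := by
    intro e he f hf hef
    refine Finset.disjoint_left.2 fun v hve hvf => hM.2 e ?_ f ?_ hef v ⟨?_, ?_⟩ <;> simp_all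
  have htwo : ∀ e ∈ M.toFinset, e.toFinset.card = 2 := fun e he =>
    Sym2.card_toFinset_of_not_isDiag e (A.not_isDiag_of_mem_edgeSet (hM.1 (by simpa using he)))
  rw [hsupp, Set.ncard_coe_finset, Finset.card_biUnion hdisj, Finset.sum_const_nat htwo,
    Set.ncard_eq_toFinset_card', mul_comm]

lemma IsMatch.ncard_le_of_rsupp_subset [Fintype V] (hM : IsMatch A M) (hN : IsMatch A N)
    (h : Rsupp M ⊆ Rsupp N) : M.ncard ≤ N.ncard := by
  have := Set.ncard_le_ncard h
  rw [hM.ncard_rsupp, hN.ncard_rsupp] at this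
  omega

lemma IsMatch.ncard_meeting_le [Fintype V] (hM : IsMatch A M) (S : Set V) :
    {e ∈ M | ∃ v ∈ S, v ∈ e}.ncard ≤ S.ncard := by
  classical
  rw [Set.ncard_eq_toFinset_card', Set.ncard_eq_toFinset_card']
  refine Finset.card_le_card_of_forall_subsingleton (fun e v => v ∈ e) (by simp) ?_
  rintro v - e₁ ⟨he₁, hv₁⟩ e₂ ⟨he₂, hv₂⟩
  by_contra hne
  exact hM.2 e₁ (by simp_all) e₂ (by simp_all) hne v ⟨hv₁, hv₂⟩

lemma IsMatch.union (hM : IsMatch A M) (hN : IsMatch A N) (h : Disjoint (Rsupp M) (Rsupp N)) :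
    IsMatch A (M ∪ N) := by
  refine ⟨Set.union_subset hM.1 hN.1, ?_⟩
  rintro e (he | he) f (hf | hf) hef v ⟨hve, hvf⟩
  · exact hM.2 e he f hf hef v ⟨hve, hvf⟩
  · exact Set.disjoint_left.1 h ⟨e, he, hve⟩ ⟨f, hf, hvf⟩
  · exact Set.disjoint_left.1 h ⟨f, hf, hvf⟩ ⟨e, he, hve⟩
  · exact hN.2 e he f hf hef v ⟨hve, hvf⟩

lemma ncard_union_of_disjoint_rsupp [Finite V] (h : Disjoint (Rsupp M) (Rsupp N)) :
    (M ∪ N).ncard = M.ncard + N.ncard := by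
  refine Set.ncard_union_eq (Set.disjoint_left.2 fun e heM heN => ?_)
  induction e using Sym2.ind with
  | _ x y =>
    exact Set.disjoint_left.1 h ⟨_, heM, Sym2.mem_mk_left x y⟩ ⟨_, heN, Sym2.mem_mk_left x y⟩

end Matching

section Star

variable {V : Type*} {A : SimpleGraph V} {B : Set V} {F : V → V}

lemma rsupp_image_mk : Rsupp ((fun b => s(b, F b)) '' B) = B ∪ F '' B := by
  ext v
  simp only [Rsupp, Set.mem_ofPred_eq, Set.exists_mem_image, Sym2.mem_iff, Set.mem_union]
  grind

lemma isMatch_image_mk (hadj : ∀ b ∈ B, A.Adj b (F b)) (hout : ∀ b ∈ B, F b ∉ B)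
    (hinj : Set.InjOn F B) : IsMatch A ((fun b => s(b, F b)) '' B) := by
  refine ⟨Set.image_subset_iff.2 hadj, ?_⟩
  rintro _ ⟨b₁, hb₁, rfl⟩ _ ⟨b₂, hb₂, rfl⟩ hne v ⟨hv₁, hv₂⟩
  rcases Sym2.mem_iff.1 hv₁ with rfl | rfl <;> rcases Sym2.mem_iff.1 hv₂ with h | h
  · exact hne (by rw [h])
  · exact hout b₂ hb₂ (h ▸ hb₁)
  · exact hout _ hb₁ (h ▸ hb₂)
  · exact hne (by rw [hinj hb₁ hb₂ h])

lemma ncard_image_mk (hout : ∀ b ∈ B, F b ∉ B) : ((fun b => s(b, F b)) '' B).ncard = B.ncard := by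
  refine Set.InjOn.ncard_image fun b₁ hb₁ b₂ hb₂ h => ?_
  rcases Sym2.eq_iff.1 h with ⟨h, -⟩ | ⟨h, -⟩
  · exact h
  · exact absurd (h ▸ hb₁) (hout b₂ hb₂)

end Star

namespace SimpleGraph

variable {V : Type*} {A : SimpleGraph V}

theorem IsTree.eq_of_adj_of_dist_add_one (hA : A.IsTree) {u b₁ b₂ c : V} (h₁ : A.Adj b₁ c)
    (h₂ : A.Adj b₂ c) (hd₁ : A.dist u b₁ + 1 = A.dist u c) (hd₂ : A.dist u b₂ + 1 = A.dist u c) :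
    b₁ = b₂ := by
  obtain ⟨p₁, -, hp₁⟩ := hA.connected.exists_path_of_dist u b₁
  obtain ⟨p₂, -, hp₂⟩ := hA.connected.exists_path_of_dist u b₂
  have hpath₁ := (p₁.concat h₁).isPath_of_length_eq_dist (by rw [Walk.length_concat, hp₁, hd₁])
  have hpath₂ := (p₂.concat h₂).isPath_of_length_eq_dist (by rw [Walk.length_concat, hp₂, hd₂])
  have heq := (hA.isAcyclic.subsingleton_path u c).elim ⟨_, hpath₁⟩ ⟨_, hpath₂⟩
  exact (Walk.concat_inj (Subtype.mk.inj heq)).1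

theorem IsTree.dist_eq_add_one_of_adj_of_adj (hA : A.IsTree) (u : V) {b c₁ c₂ : V}
    (h₁ : A.Adj b c₁) (h₂ : A.Adj b c₂) (hne : c₁ ≠ c₂) :
    A.dist u c₁ = A.dist u b + 1 ∨ A.dist u c₂ = A.dist u b + 1 := by
  rcases hA.dist_eq_dist_add_one_of_adj u h₁ with hd₁ | hd₁ <;>
    rcases hA.dist_eq_dist_add_one_of_adj u h₂ with hd₂ | hd₂
  · exact absurd (hA.eq_of_adj_of_dist_add_one h₁.symm h₂.symm hd₁.symm hd₂.symm) hne
  all_goals tauto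

end SimpleGraph

namespace IsBColoring

variable {V : Type*} {A : SimpleGraph V} {B : Set V} {R : Set (Sym2 V)} {G : Set V}

lemma exists_green_child (hBC : IsBColoring A B R G) (hA : A.IsTree) (u : V) {b : V}
    (hb : b ∈ B) : ∃ c ∈ G, A.Adj b c ∧ A.dist u c = A.dist u b + 1 := by
  obtain ⟨-, -, -, -, -, -, -, hBdeg⟩ := hBC
  have htwo := hBdeg b hb
  obtain ⟨c₁, c₂, ⟨h₁, hG₁⟩, ⟨h₂, hG₂⟩, hne⟩ :=
    (Set.one_lt_ncard_iff (Set.finite_of_ncard_pos (by omega))).1 htwo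
  rcases hA.dist_eq_add_one_of_adj_of_adj u h₁ h₂ hne with hd | hd
  exacts [⟨c₁, hG₁, h₁, hd⟩, ⟨c₂, hG₂, h₂, hd⟩]

lemma ncard_le_of_isMatch [Fintype V] (hBC : IsBColoring A B R G) {N : Set (Sym2 V)}
    (hN : IsMatch A N) : N.ncard ≤ R.ncard + B.ncard := by
  obtain ⟨hRE, hcover, -, -, -, hRmatch, hGB, -⟩ := hBC
  set NB := {e ∈ N | ∃ v ∈ B, v ∈ e}
  have hrest : IsMatch A (N \ NB) :=
    ⟨Set.sdiff_subset.trans hN.1, fun e he f hf => hN.2 e he.1 f hf.1⟩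
  have hsupp : Rsupp (N \ NB) ⊆ Rsupp R := by
    rintro v ⟨e, ⟨heN, heB⟩, hve⟩
    have hvB : v ∉ B := fun hv => heB ⟨heN, v, hv, hve⟩
    have hvG : v ∉ G := by
      intro hv
      obtain ⟨w, rfl⟩ := Sym2.mem_iff_exists.1 hve
      exact heB ⟨heN, w, hGB v w (hN.1 heN) hv, Sym2.mem_mk_right v w⟩
    have hv : v ∈ B ∪ G ∪ Rsupp R := hcover ▸ Set.mem_univ v
    simpa [hvB, hvG] using hv
  calc N.ncard = (N \ NB).ncard + NB.ncard :=
        (Set.ncard_sdiff_add_ncard_of_subset (Set.sep_subset _ _)).symm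
    _ ≤ R.ncard + B.ncard :=
        add_le_add (hrest.ncard_le_of_rsupp_subset ⟨hRE, hRmatch⟩ hsupp) (hN.ncard_meeting_le B)

lemma isMaxMatch_union_image_mk [Fintype V] (hBC : IsBColoring A B R G) {F : V → V}
    (hadj : ∀ b ∈ B, A.Adj b (F b)) (hFG : ∀ b ∈ B, F b ∈ G) (hinj : Set.InjOn F B) :
    IsMaxMatch A (R ∪ (fun b => s(b, F b)) '' B) := by
  obtain ⟨hRE, -, hBG, hBR, hGR, hRmatch, -, -⟩ := id hBC
  have hout : ∀ b ∈ B, F b ∉ B := fun b hb hFb => hBG.notMem_of_mem_left hFb (hFG b hb)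
  have hdisj : Disjoint (Rsupp R) (Rsupp ((fun b => s(b, F b)) '' B)) := by
    rw [rsupp_image_mk]
    exact Set.disjoint_union_right.2 ⟨hBR.symm, hGR.symm.mono_right (Set.image_subset_iff.2 hFG)⟩
  refine ⟨IsMatch.union ⟨hRE, hRmatch⟩ (isMatch_image_mk hadj hout hinj) hdisj, fun N hN => ?_⟩
  rw [ncard_union_of_disjoint_rsupp hdisj, ncard_image_mk hout]
  exact hBC.ncard_le_of_isMatch hN

end IsBColoring

theorem green_vertices_optional (A : SimpleGraph V) (hA : A.IsTree)
    (B : Set V) (R : Set (Sym2 V)) (G : Set V) (hBC : IsBColoring A B R G)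
    (g : V) (hg : g ∈ G) :
    ∃ M : Set (Sym2 V), IsMaxMatch A M ∧ ∀ e ∈ M, g ∉ e := by
  choose! F hFG hFadj hFdist using fun b (hb : b ∈ B) => hBC.exists_green_child hA g hb
  have hinj : Set.InjOn F B := fun b₁ hb₁ b₂ hb₂ h =>
    hA.eq_of_adj_of_dist_add_one (hFadj b₁ hb₁) (h ▸ hFadj b₂ hb₂) (hFdist b₁ hb₁).symm
      (h ▸ hFdist b₂ hb₂).symm
  refine ⟨_, hBC.isMaxMatch_union_image_mk hFadj hFG hinj, ?_⟩
  obtain ⟨-, -, hBG, -, hGR, -⟩ := hBC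
  rintro e (he | ⟨b, hb, rfl⟩) hge
  · exact Set.disjoint_left.1 hGR hg ⟨e, he, hge⟩
  · rcases Sym2.mem_iff.1 hge with rfl | hgF
    · exact Set.disjoint_left.1 hBG hb hg
    · have hd := hFdist b hb
      rw [← hgF, SimpleGraph.dist_self] at hd
      omega
end

section
/- Let A be a finite tree with a tricoloring (B, R, G) satisfying: B, G, and the endpoints of edges in R partition the vertices; edges of R are pairwise non-adjacent; every edge with one endpoint in G has the other endpoint in B; every vertex of B has at least two neighbors in G. Then every vertex of B is unavoidable: every maximum matching of A contains an edge with that vertex as an endpoint, yet no single edge incident to it lies in all maximum matchings. -/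
variable {V : Type*} [Fintype V] [DecidableEq V]

/-!
Root the tree at a vertex `r`. If `c` is unmatched and `g ∈ G` is a child of `c`, then either `g`
is unmatched, or it is matched to a vertex `b₁`, which lies in `B` (vertices of `G` only have
neighbours in `B`) and, having two neighbours in `G`, has a child `g₁ ∈ G`. Following `c, g, b₁, g₁, …`
down the finite tree yields an augmenting path that starts with the edge `cg` and only touches
vertices below `c`.

With the root at `b`: a maximum matching missing `b` could be augmented, and a maximum matching
containing an edge `bx` becomes, after deleting `bx` and augmenting through a neighbour
`g ∈ G` of `b` other than `x`, a maximum matching containing `bg` instead of `bx`.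
-/

open SimpleGraph

section Tree

variable {V : Type*} {A : SimpleGraph V}

theorem SimpleGraph.IsTree.eq_of_adj_of_dist_eq_add_one (hA : A.IsTree) {r x y c : V}
    (hx : A.Adj x c) (hy : A.Adj y c) (hdx : A.dist r c = A.dist r x + 1)
    (hdy : A.dist r c = A.dist r y + 1) : x = y := by
  obtain ⟨p, -, hp⟩ := hA.connected.exists_path_of_dist r x
  obtain ⟨q, -, hq⟩ := hA.connected.exists_path_of_dist r y
  have hpc : (p.concat hx).IsPath := (p.concat hx).isPath_of_length_eq_dist (by simp [hp, hdx])
  have hqc : (q.concat hy).IsPath := (q.concat hy).isPath_of_length_eq_dist (by simp [hq, hdy])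
  have hpq : p.concat hx = q.concat hy :=
    congrArg Subtype.val ((hA.isAcyclic.subsingleton_path r c).elim ⟨_, hpc⟩ ⟨_, hqc⟩)
  exact (Walk.concat_inj hpq).1

theorem SimpleGraph.IsTree.dist_eq_add_one_of_adj_of_ne (hA : A.IsTree) {r p c w : V}
    (hpc : A.Adj p c) (hdc : A.dist r c = A.dist r p + 1) (hcw : A.Adj c w) (hwp : w ≠ p) :
    A.dist r w = A.dist r c + 1 :=
  (hA.dist_eq_dist_add_one_of_adj r hcw).resolve_left fun hdc' =>
    hwp (hA.eq_of_adj_of_dist_eq_add_one hcw.symm hpc hdc' hdc)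

end Tree

section Matching

variable {V : Type*} {A : SimpleGraph V} {M N : Set (Sym2 V)}

theorem Rsupp_mono (h : M ⊆ N) : Rsupp M ⊆ Rsupp N :=
  fun _ ⟨e, he, hv⟩ => ⟨e, h he, hv⟩

theorem mem_Rsupp_insert {e : Sym2 V} {v : V} : v ∈ Rsupp (insert e M) ↔ v ∈ e ∨ v ∈ Rsupp M := by
  simp [Rsupp]

theorem IsMatch.mono (hN : IsMatch A N) (h : M ⊆ N) : IsMatch A M :=
  ⟨h.trans hN.1, fun e he f hf => hN.2 e (h he) f (h hf)⟩

theorem IsMatch.eq_of_mem_of_mem (hM : IsMatch A M) {e f : Sym2 V} {v : V} (he : e ∈ M)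
    (hf : f ∈ M) (hve : v ∈ e) (hvf : v ∈ f) : e = f := by
  by_contra hne
  exact hM.2 e he f hf hne v ⟨hve, hvf⟩

theorem IsMatch.exists_adj_of_mem (hM : IsMatch A M) {e : Sym2 V} (he : e ∈ M) {v : V}
    (hv : v ∈ e) : ∃ w, A.Adj v w ∧ e = s(v, w) := by
  obtain ⟨w, rfl⟩ := Sym2.mem_iff_exists.mp hv
  exact ⟨w, hM.1 he, rfl⟩

theorem IsMatch.notMem_Rsupp_diff_singleton (hM : IsMatch A M) {e : Sym2 V} (he : e ∈ M)
    {v : V} (hv : v ∈ e) : v ∉ Rsupp (M \ {e}) :=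
  fun ⟨_, hf, hvf⟩ => hf.2 (hM.eq_of_mem_of_mem hf.1 he hvf hv)

theorem IsMatch.insert_mk (hM : IsMatch A M) {u v : V} (huv : A.Adj u v) (hu : u ∉ Rsupp M)
    (hv : v ∉ Rsupp M) : IsMatch A (insert s(u, v) M) := by
  have hfree : ∀ f ∈ M, ∀ w ∈ s(u, v), w ∉ f := by
    intro f hf w hw hwf
    rcases Sym2.mem_iff.mp hw with rfl | rfl
    exacts [hu ⟨f, hf, hwf⟩, hv ⟨f, hf, hwf⟩]
  refine ⟨Set.insert_subset huv hM.1, ?_⟩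
  rintro e (rfl | he) f (rfl | hf) hne w ⟨hwe, hwf⟩
  · exact hne rfl
  · exact hfree f hf w hwe hwf
  · exact hfree e he w hwf hwe
  · exact hM.2 e he f hf hne w ⟨hwe, hwf⟩

theorem exists_isMaxMatch [Finite V] (A : SimpleGraph V) : ∃ M, IsMaxMatch A M := by
  obtain ⟨M, hM, hmax⟩ := Set.Finite.exists_maximalFor Set.ncard {M | IsMatch A M}
    (Set.toFinite _) ⟨∅, Set.empty_subset _, by simp⟩
  refine ⟨M, hM, fun N hN => ?_⟩
  by_contra! h
  have := hmax hN h.le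
  omega

theorem IsMaxMatch.of_ncard_le (hM : IsMaxMatch A M) (hN : IsMatch A N)
    (h : M.ncard ≤ N.ncard) : IsMaxMatch A N :=
  ⟨hN, fun _ hL => (hM.2 _ hL).trans h⟩

end Matching

section Augment

variable {V : Type*} [Finite V] {A : SimpleGraph V} {B G : Set V}

theorem IsMatch.exists_augment (hA : A.IsTree) (hGB : ∀ v w : V, A.Adj v w → v ∈ G → w ∈ B)
    (hB2 : ∀ b ∈ B, 2 ≤ (A.neighborSet b ∩ G).ncard) (r : V) {M : Set (Sym2 V)}
    (hM : IsMatch A M) {c g : V} (hcM : c ∉ Rsupp M) (hcg : A.Adj c g) (hg : g ∈ G)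
    (hdg : A.dist r g = A.dist r c + 1) :
    ∃ M', IsMatch A M' ∧ s(c, g) ∈ M' ∧ M'.ncard = M.ncard + 1 ∧
      ∀ v ∈ Rsupp M', v ∉ Rsupp M → A.dist r c ≤ A.dist r v := by
  by_cases hgM : g ∈ Rsupp M
  · obtain ⟨e, he, hge⟩ := hgM
    obtain ⟨b₁, hgb₁, rfl⟩ := hM.exists_adj_of_mem he hge
    have hb₁c : b₁ ≠ c := by
      rintro rfl
      exact hcM ⟨_, he, Sym2.mem_mk_right g b₁⟩
    have hdb₁ := hA.dist_eq_add_one_of_adj_of_ne hcg hdg hgb₁ hb₁c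
    obtain ⟨g₁, ⟨hb₁g₁ : A.Adj b₁ g₁, hg₁⟩, hg₁g⟩ :=
      Set.exists_ne_of_one_lt_ncard (hB2 b₁ (hGB g b₁ hgb₁ hg)) g
    have hdg₁ := hA.dist_eq_add_one_of_adj_of_ne hgb₁ hdb₁ hb₁g₁ hg₁g
    have hM₁ : IsMatch A (M \ {s(g, b₁)}) := hM.mono Set.sdiff_subset
    obtain ⟨M₂, hM₂, -, hcard₂, hnew₂⟩ := hM₁.exists_augment hA hGB hB2 r
      (hM.notMem_Rsupp_diff_singleton he (Sym2.mem_mk_right g b₁)) hb₁g₁ hg₁ hdg₁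
    have hcM₂ : c ∉ Rsupp M₂ := fun h => by
      have := hnew₂ c h fun h' => hcM (Rsupp_mono Set.sdiff_subset h')
      omega
    have hgM₂ : g ∉ Rsupp M₂ := fun h => by
      have := hnew₂ g h (hM.notMem_Rsupp_diff_singleton he (Sym2.mem_mk_left g b₁))
      omega
    refine ⟨insert s(c, g) M₂, hM₂.insert_mk hcg hcM₂ hgM₂, Set.mem_insert _ _, ?_, ?_⟩
    · rw [Set.ncard_insert_of_notMem fun h => hcM₂ ⟨_, h, Sym2.mem_mk_left c g⟩, hcard₂,
        Set.ncard_sdiff_singleton_add_one he]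
    · intro v hv hvM
      rcases mem_Rsupp_insert.mp hv with hv | hv
      · rcases Sym2.mem_iff.mp hv with rfl | rfl <;> omega
      · have := hnew₂ v hv fun h => hvM (Rsupp_mono Set.sdiff_subset h)
        omega
  · refine ⟨insert s(c, g) M, hM.insert_mk hcg hcM hgM, Set.mem_insert _ _,
      Set.ncard_insert_of_notMem fun h => hcM ⟨_, h, Sym2.mem_mk_left c g⟩, ?_⟩
    intro v hv hvM
    rcases mem_Rsupp_insert.mp hv with hv | hv
    · rcases Sym2.mem_iff.mp hv with rfl | rfl <;> omega
    · exact absurd hv hvM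
termination_by M.ncard
decreasing_by exact Set.ncard_sdiff_singleton_lt_of_mem he

end Augment

theorem brown_vertices_unavoidable (A : SimpleGraph V) (hA : A.IsTree)
    (B : Set V) (R : Set (Sym2 V)) (G : Set V) (hBC : IsBColoring A B R G)
    (b : V) (hb : b ∈ B) :
    (∀ M : Set (Sym2 V), IsMaxMatch A M → ∃ e ∈ M, b ∈ e) ∧
    (∀ e ∈ A.edgeSet, b ∈ e → ∃ M : Set (Sym2 V), IsMaxMatch A M ∧ e ∉ M) := by
  obtain ⟨-, -, -, -, -, -, hGB, hB2⟩ := hBC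
  have hgreen (x : V) : ∃ g, A.Adj b g ∧ g ∈ G ∧ g ≠ x :=
    let ⟨g, ⟨hbg, hg⟩, hgx⟩ := Set.exists_ne_of_one_lt_ncard (hB2 b hb) x
    ⟨g, hbg, hg, hgx⟩
  have hchild {g : V} (hbg : A.Adj b g) : A.dist b g = A.dist b b + 1 := by
    rw [dist_self, dist_eq_one_iff_adj.mpr hbg]
  refine ⟨fun M hM => ?_, fun e _ hbe => ?_⟩
  · by_contra hbM
    obtain ⟨g, hbg, hg, -⟩ := hgreen b
    obtain ⟨M', hM', -, hcard, -⟩ := hM.1.exists_augment hA hGB hB2 b hbM hbg hg (hchild hbg)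
    have := hM.2 M' hM'
    omega
  · obtain ⟨x, rfl⟩ := Sym2.mem_iff_exists.mp hbe
    obtain ⟨M, hM⟩ := exists_isMaxMatch A
    by_cases hbxM : s(b, x) ∈ M
    case neg => exact ⟨M, hM, hbxM⟩
    obtain ⟨g, hbg, hg, hgx⟩ := hgreen x
    obtain ⟨M', hM', hbgM', hcard, -⟩ := (hM.1.mono Set.sdiff_subset).exists_augment hA hGB hB2 b
      (hM.1.notMem_Rsupp_diff_singleton hbxM (Sym2.mem_mk_left b x)) hbg hg (hchild hbg)
    refine ⟨M', hM.of_ncard_le hM' (by rw [hcard, Set.ncard_sdiff_singleton_add_one hbxM]),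
      fun hbxM' => hgx ((Sym2.congr_right (a := b)).mp ?_)⟩
    exact hM'.eq_of_mem_of_mem hbgM' hbxM' (Sym2.mem_mk_left b g) (Sym2.mem_mk_left b x)
end

section
/- A finite tree admits at most one tricoloring (B, R, G) satisfying: B, G, and the set of endpoints of edges in R form a partition of the vertex set; the edges in R are pairwise non-adjacent; every edge with one endpoint in G has its other endpoint in B; and every vertex of B has at least two neighbors in G. -/
variable {V : Type*} [Fintype V] [DecidableEq V]

/-!
If two such colorings differ somewhere, the disagreement propagates: from a vertex where they
disagree one can always move to a further neighbour, never back along the edge just used, at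
which they disagree again. This uses that every `B`-vertex has two `G`-neighbours, that
`G`-vertices only have `B`-neighbours and that `R` is a matching. The result is an infinite
non-backtracking walk, which a finite tree does not have. Once `B` and `G` agree, `R₁` and `R₂`
are matchings covering the same vertices, and their symmetric difference would again yield such
a walk.
-/

section

-- A fresh `V`, so that the instances `[Fintype V] [DecidableEq V]` bound above are not attached
-- to every lemma.
variable {V : Type*}

namespace SimpleGraph

variable [Finite V] {A : SimpleGraph V}

theorem IsAcyclic.not_exists_nonbacktracking_seq (hA : A.IsAcyclic) :
    ¬ ∃ f : ℕ → V, ∀ n, A.Adj (f n) (f (n + 1)) ∧ f (n + 2) ≠ f n := by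
  rintro ⟨f, hf⟩
  have := Fintype.ofFinite V
  let W : ∀ n, A.Walk (f 0) (f n) := fun n => Nat.rec .nil (fun n w => w.concat (hf n).1) n
  have hW : ∀ n, (W (n + 1)).IsPath ∧ (W (n + 1)).penultimate = f n := by
    intro n
    induction n with
    | zero =>
      refine ⟨Walk.IsPath.nil.concat ?_ (hf 0).1, Walk.penultimate_concat _ _⟩
      simpa using (hf 0).1.ne'
    | succ n ih =>
      -- in a forest, a path vertex adjacent to the endpoint is the penultimate vertex `f n`
      refine ⟨ih.1.concat (fun hmem => ?_) (hf (n + 1)).1, Walk.penultimate_concat _ _⟩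
      exact (hf n).2 ((hA.eq_penultimate_of_adj_end ih.1 (hf (n + 1)).1 hmem).trans ih.2)
  have hlen : ∀ n, (W n).length = n := fun n => by induction n <;> simp [W, *]
  have := (hW (Fintype.card V)).1.length_lt
  simp only [hlen] at this
  omega

theorem IsAcyclic.not_of_forall_exists_next (hA : A.IsAcyclic) {S : V → V → Prop}
    (hS : ∀ ⦃u v⦄, S u v → A.Adj u v) (hnext : ∀ ⦃u v⦄, S u v → ∃ w ≠ u, S v w) (u v : V) :
    ¬ S u v := by
  intro huv
  choose! next hnext_ne hnext_S using fun u v (h : S u v) => hnext h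
  let x : ℕ → V × V := fun n => (fun d : V × V => (d.2, next d.1 d.2))^[n] (u, v)
  have hx_succ : ∀ n, x (n + 1) = ((x n).2, next (x n).1 (x n).2) :=
    fun n => Function.iterate_succ_apply' _ _ _
  have hxS : ∀ n, S (x n).1 (x n).2 := by
    intro n
    induction n with
    | zero => exact huv
    | succ n ih => rw [hx_succ]; exact hnext_S _ _ ih
  refine hA.not_exists_nonbacktracking_seq ⟨fun n => (x n).1, fun n => ⟨?_, ?_⟩⟩
  · simp only [hx_succ]
    exact hS (hxS n)
  · simp only [hx_succ]
    exact hnext_ne _ _ (hxS n)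

end SimpleGraph

theorem mem_Rsupp_iff {R : Set (Sym2 V)} {v : V} : v ∈ Rsupp R ↔ ∃ w, s(v, w) ∈ R := by
  constructor
  · rintro ⟨e, he, hve⟩
    obtain ⟨w, rfl⟩ := Sym2.mem_iff_exists.1 hve
    exact ⟨w, he⟩
  · rintro ⟨w, hw⟩
    exact ⟨_, hw, Sym2.mem_mk_left v w⟩

namespace IsMatch

variable {A : SimpleGraph V} {M N : Set (Sym2 V)}

theorem adj (hM : IsMatch A M) {v w : V} (h : s(v, w) ∈ M) : A.Adj v w := hM.1 h

theorem eq_of_mem_of_mem_s7 (hM : IsMatch A M) {v w x : V} (hw : s(v, w) ∈ M)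
    (hx : s(v, x) ∈ M) : w = x := by
  by_contra hne
  exact hM.2 _ hw _ hx (fun h => hne (Sym2.congr_right.1 h)) v
    ⟨Sym2.mem_mk_left v w, Sym2.mem_mk_left v x⟩

theorem exists_mem_diff_of_mem_diff (hM : IsMatch A M) (hs : Rsupp M ⊆ Rsupp N) {p q : V}
    (h : s(p, q) ∈ M \ N) : ∃ w ≠ p, s(q, w) ∈ N \ M := by
  obtain ⟨w, hw⟩ := mem_Rsupp_iff.1 (hs (mem_Rsupp_iff.2 ⟨p, by rw [Sym2.eq_swap]; exact h.1⟩))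
  have hwp : w ≠ p := by
    rintro rfl
    exact h.2 (by rwa [Sym2.eq_swap])
  refine ⟨w, hwp, hw, fun hwM => hwp (hM.eq_of_mem_of_mem_s7 hwM ?_)⟩
  rw [Sym2.eq_swap]
  exact h.1

theorem eq_of_Rsupp_eq [Finite V] (hA : A.IsAcyclic) (hM : IsMatch A M) (hN : IsMatch A N)
    (hs : Rsupp M = Rsupp N) : M = N := by
  have key := hA.not_of_forall_exists_next
    (S := fun p q => s(p, q) ∈ M \ N ∨ s(p, q) ∈ N \ M)
    (fun _ _ h => h.elim (fun h => hM.adj h.1) (fun h => hN.adj h.1))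
    (fun _ _ h => h.elim
      (fun h => (hM.exists_mem_diff_of_mem_diff hs.le h).imp fun _ hw => ⟨hw.1, .inr hw.2⟩)
      (fun h => (hN.exists_mem_diff_of_mem_diff hs.ge h).imp fun _ hw => ⟨hw.1, .inl hw.2⟩))
  ext e
  induction e using Sym2.ind with
  | _ u v =>
    have := key u v
    simp only [Set.mem_sdiff] at this
    tauto

end IsMatch

namespace IsBColoring

variable {A : SimpleGraph V} {B G : Set V} {R : Set (Sym2 V)}

theorem isMatch (h : IsBColoring A B R G) : IsMatch A R := ⟨h.1, h.2.2.2.2.2.1⟩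

theorem mem_or_mem_or_mem (h : IsBColoring A B R G) (v : V) :
    v ∈ B ∨ v ∈ G ∨ v ∈ Rsupp R := by
  have : v ∈ B ∪ G ∪ Rsupp R := h.2.1 ▸ Set.mem_univ v
  simpa only [Set.mem_union, or_assoc] using this

theorem Rsupp_eq_compl (h : IsBColoring A B R G) : Rsupp R = (B ∪ G)ᶜ := by
  ext v
  simp only [Set.mem_compl_iff, Set.mem_union, not_or]
  refine ⟨fun hv => ⟨fun hB => ?_, fun hG => ?_⟩, fun ⟨hB, hG⟩ => ?_⟩
  · exact Set.disjoint_left.1 h.2.2.2.1 hB hv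
  · exact Set.disjoint_left.1 h.2.2.2.2.1 hG hv
  · exact ((h.mem_or_mem_or_mem v).resolve_left hB).resolve_left hG

theorem mem_B_of_adj_of_mem_G (h : IsBColoring A B R G) {v w : V} (hvw : A.Adj v w)
    (hv : v ∈ G) : w ∈ B :=
  h.2.2.2.2.2.2.1 v w hvw hv

theorem exists_adj_mem_G_ne (h : IsBColoring A B R G) {b : V} (hb : b ∈ B) (p : V) :
    ∃ g ≠ p, A.Adj b g ∧ g ∈ G := by
  obtain ⟨g, hg, hgp⟩ :=
    Set.exists_ne_of_one_lt_ncard (s := A.neighborSet b ∩ G) (h.2.2.2.2.2.2.2 b hb) p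
  exact ⟨g, hgp, hg⟩

end IsBColoring

/-- The edge `(p, v)` enters a vertex at which the colorings `(B, _, G)` and `(_, R', G')`
disagree in one of three ways, each of which propagates to some edge `(v, w)` with `w ≠ p`. -/
def Conflict (A : SimpleGraph V) (B G : Set V) (R' : Set (Sym2 V)) (G' : Set V)
    (p v : V) : Prop :=
  A.Adj p v ∧ (v ∈ B ∧ v ∈ G' ∨ v ∈ G ∧ (∃ w ≠ p, s(v, w) ∈ R') ∨ v ∈ B ∧ s(v, p) ∈ R')

section Conflict

variable {A : SimpleGraph V} {B₁ B₂ G₁ G₂ : Set V} {R₁ R₂ : Set (Sym2 V)}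

theorem Conflict.exists_next (h₁ : IsBColoring A B₁ R₁ G₁) (h₂ : IsBColoring A B₂ R₂ G₂)
    {p v : V} (hc : Conflict A B₁ G₁ R₂ G₂ p v) :
    ∃ w ≠ p, Conflict A B₁ G₁ R₂ G₂ v w ∨ Conflict A B₂ G₂ R₁ G₁ v w := by
  obtain ⟨-, ⟨hvB₁, hvG₂⟩ | ⟨hvG₁, w, hwp, hvw⟩ | ⟨hvB₁, hvp⟩⟩ := hc
  · obtain ⟨g, hgp, hvg, hgG₁⟩ := h₁.exists_adj_mem_G_ne hvB₁ p
    exact ⟨g, hgp, .inr ⟨hvg, .inl ⟨h₂.mem_B_of_adj_of_mem_G hvg hvG₂, hgG₁⟩⟩⟩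
  · have hvw' := h₂.isMatch.adj hvw
    refine ⟨w, hwp, .inl ⟨hvw', .inr (.inr ⟨h₁.mem_B_of_adj_of_mem_G hvw' hvG₁, ?_⟩)⟩⟩
    rwa [Sym2.eq_swap]
  · obtain ⟨g, hgp, hvg, hgG₁⟩ := h₁.exists_adj_mem_G_ne hvB₁ p
    refine ⟨g, hgp, ?_⟩
    rcases h₂.mem_or_mem_or_mem g with hgB₂ | hgG₂ | hgR₂
    · exact .inr ⟨hvg, .inl ⟨hgB₂, hgG₁⟩⟩
    · have hvR₂ : v ∈ Rsupp R₂ := mem_Rsupp_iff.2 ⟨p, hvp⟩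
      rw [h₂.Rsupp_eq_compl] at hvR₂
      exact (hvR₂ (.inl (h₂.mem_B_of_adj_of_mem_G hvg.symm hgG₂))).elim
    · obtain ⟨w, hgw⟩ := mem_Rsupp_iff.1 hgR₂
      have hwv : w ≠ v := by
        rintro rfl
        exact hgp (h₂.isMatch.eq_of_mem_of_mem_s7 (by rwa [Sym2.eq_swap]) hvp)
      exact .inl ⟨hvg, .inr (.inl ⟨hgG₁, w, hwv, hgw⟩)⟩

theorem not_conflict [Finite V] (hA : A.IsAcyclic) (h₁ : IsBColoring A B₁ R₁ G₁)
    (h₂ : IsBColoring A B₂ R₂ G₂) (p v : V) : ¬ Conflict A B₁ G₁ R₂ G₂ p v := fun hc =>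
  hA.not_of_forall_exists_next
    (S := fun p v => Conflict A B₁ G₁ R₂ G₂ p v ∨ Conflict A B₂ G₂ R₁ G₁ p v)
    (fun _ _ h => h.elim (·.1) (·.1))
    (fun _ _ h => h.elim (Conflict.exists_next h₁ h₂)
      (fun h => (Conflict.exists_next h₂ h₁ h).imp fun _ hw => ⟨hw.1, hw.2.symm⟩))
    p v (.inl hc)

theorem IsBColoring.subset_of_isAcyclic [Finite V] (hA : A.IsAcyclic)
    (h₁ : IsBColoring A B₁ R₁ G₁) (h₂ : IsBColoring A B₂ R₂ G₂) : B₁ ⊆ B₂ ∧ G₁ ⊆ G₂ := by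
  have hc₁₂ := not_conflict hA h₁ h₂
  have hc₂₁ := not_conflict hA h₂ h₁
  refine ⟨fun v hvB₁ => ?_, fun v hvG₁ => ?_⟩
  · rcases h₂.mem_or_mem_or_mem v with hvB₂ | hvG₂ | hvR₂
    · exact hvB₂
    · obtain ⟨g, -, hvg, -⟩ := h₁.exists_adj_mem_G_ne hvB₁ v
      exact (hc₁₂ g v ⟨hvg.symm, .inl ⟨hvB₁, hvG₂⟩⟩).elim
    · obtain ⟨w, hvw⟩ := mem_Rsupp_iff.1 hvR₂
      exact (hc₁₂ w v ⟨(h₂.isMatch.adj hvw).symm, .inr (.inr ⟨hvB₁, hvw⟩)⟩).elim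
  · rcases h₂.mem_or_mem_or_mem v with hvB₂ | hvG₂ | hvR₂
    · obtain ⟨g, -, hvg, -⟩ := h₂.exists_adj_mem_G_ne hvB₂ v
      exact (hc₂₁ g v ⟨hvg.symm, .inl ⟨hvB₂, hvG₁⟩⟩).elim
    · exact hvG₂
    · obtain ⟨w, hvw⟩ := mem_Rsupp_iff.1 hvR₂
      have hvw' := h₂.isMatch.adj hvw
      have hwB₁ := h₁.mem_B_of_adj_of_mem_G hvw' hvG₁
      exact (hc₁₂ v w ⟨hvw', .inr (.inr ⟨hwB₁, by rwa [Sym2.eq_swap]⟩)⟩).elim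

end Conflict

end

theorem bColoring_unique (A : SimpleGraph V) (hA : A.IsTree)
    (B₁ B₂ : Set V) (R₁ R₂ : Set (Sym2 V)) (G₁ G₂ : Set V)
    (h₁ : IsBColoring A B₁ R₁ G₁) (h₂ : IsBColoring A B₂ R₂ G₂) :
    B₁ = B₂ ∧ R₁ = R₂ ∧ G₁ = G₂ := by
  obtain ⟨hB₁₂, hG₁₂⟩ := h₁.subset_of_isAcyclic hA.isAcyclic h₂
  obtain ⟨hB₂₁, hG₂₁⟩ := h₂.subset_of_isAcyclic hA.isAcyclic h₁
  have hB := hB₁₂.antisymm hB₂₁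
  have hG := hG₁₂.antisymm hG₂₁
  refine ⟨hB, IsMatch.eq_of_Rsupp_eq hA.isAcyclic h₁.isMatch h₂.isMatch ?_, hG⟩
  rw [h₁.Rsupp_eq_compl, h₂.Rsupp_eq_compl, hB, hG]
end

section
/- Every finite tree admits a tricoloring (B, R, G) with: B, G, and the endpoints of R partitioning the vertices; edges of R pairwise non-adjacent; every edge with one endpoint in G having its other endpoint in B; and every vertex of B having at least two neighbors in G. Namely, take B to be the positive vertex-cover backbone, G the negative backbone, and R the set of exclusive edges. -/
variable {V : Type*} [Fintype V] [DecidableEq V]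

/-!
Disjointness of the three colours and `G`-neighbours lying in `B` hold in every graph. The other
conditions (degenerate vertices lie on exclusive edges, exclusive edges form a matching, and each
vertex of `B` has two neighbours in `G`) are proved by induction on forests: remove a leaf `u`
together with all edges at its neighbour `v`. In the smaller forest `A'` both `u` and `v` are
isolated, and the minimum vertex covers of `A` are `insert v D` and, when `D` contains every other
neighbour of `v`, `insert u D`, for `D` a minimum vertex cover of `A'`. So backbones and exclusive
edges away from `u, v` do not change, and either `v` is avoidable, when `uv` becomes a new exclusive
edge, or `v` joins `B` and `u` joins `G`. In the latter case `v` also has a neighbour `x ≠ u` in the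
negative backbone of `A'`: the other neighbours of `v` lie in distinct components of `A'`, so
otherwise minimum covers containing each of them could be glued, component by component, into one
containing them all, and adding `u` would give a minimum cover of `A` avoiding `v`.
-/

open SimpleGraph

section

omit [Fintype V] [DecidableEq V]

variable {A : SimpleGraph V} {C D : Set V} {a b u v w z : V}

lemma isVC_iff_adj : IsVC A C ↔ ∀ a b, A.Adj a b → a ∈ C ∨ b ∈ C := by
  simp [IsVC, Sym2.forall, and_or_left, exists_or]

lemma IsVC.mono (hC : IsVC A C) (hCD : C ⊆ D) : IsVC A D :=
  isVC_iff_adj.2 fun a b hab => (isVC_iff_adj.1 hC a b hab).imp (@hCD a) (@hCD b)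

lemma exists_isMinVC (A : SimpleGraph V) : ∃ C, IsMinVC A C := by
  have huniv : IsVC A Set.univ := isVC_iff_adj.2 fun _ _ _ => Or.inl trivial
  obtain ⟨C, hC, hCn⟩ := Nat.sInf_mem (s := {n | ∃ C, IsVC A C ∧ C.ncard = n}) ⟨_, _, huniv, rfl⟩
  exact ⟨C, hC, fun D hD => hCn ▸ Nat.sInf_le ⟨D, hD, rfl⟩⟩

lemma IsMinVC.ncard_eq (hC : IsMinVC A C) (hD : IsMinVC A D) : C.ncard = D.ncard :=
  le_antisymm (hC.2 D hD.1) (hD.2 C hC.1)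

lemma IsMinVC.of_ncard_le (hC : IsMinVC A C) (hD : IsVC A D) (h : D.ncard ≤ C.ncard) :
    IsMinVC A D :=
  ⟨hD, fun _ hE => h.trans (hC.2 _ hE)⟩

lemma IsMinVC.exists_adj_notMem [Finite V] (hC : IsMinVC A C) (hz : z ∈ C) :
    ∃ w, A.Adj z w ∧ w ∉ C := by
  by_contra! h
  have hvc : IsVC A (C \ {z}) := isVC_iff_adj.2 fun a b hab => by
    by_cases ha : a = z
    · subst ha
      exact Or.inr ⟨h b hab, hab.ne'⟩
    by_cases hb : b = z
    · subst hb
      exact Or.inl ⟨h a hab.symm, hab.ne⟩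
    exact (isVC_iff_adj.1 hC.1 a b hab).imp (fun h => ⟨h, ha⟩) (fun h => ⟨h, hb⟩)
  exact (Set.ncard_sdiff_singleton_lt_of_mem hz).not_ge (hC.2 _ hvc)

lemma mem_negBB_of_isolated [Finite V] (hz : ∀ w, ¬A.Adj z w) : z ∈ NegBB A := fun _ hC hzC =>
  let ⟨w, hzw, _⟩ := hC.exists_adj_notMem hzC
  hz w hzw

lemma mem_posBB_of_adj_of_mem_negBB (hvw : A.Adj v w) (hv : v ∈ NegBB A) : w ∈ PosBB A :=
  fun C hC => (isVC_iff_adj.1 hC.1 v w hvw).resolve_left (hv C hC)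

lemma disjoint_posBB_negBB : Disjoint (PosBB A) (NegBB A) :=
  Set.disjoint_left.2 fun _ hB hG =>
    let ⟨C, hC⟩ := exists_isMinVC A
    hG C hC (hB C hC)

lemma degen_iff : Degen A w ↔ w ∉ NegBB A ∧ w ∉ PosBB A := by
  simp [Degen, NegBB, PosBB]

lemma exclusive_mk_iff :
    Exclusive A s(a, b) ↔
      A.Adj a b ∧ Degen A a ∧ Degen A b ∧ ∀ C, IsMinVC A C → a ∉ C ∨ b ∉ C := by
  simp [Exclusive, and_assoc]

lemma mem_insert_iff_of_notMem_pair (hw : w ∉ ({u, v} : Set V)) :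
    ∀ z ∈ ({u, v} : Set V), ∀ D : Set V, w ∈ insert z D ↔ w ∈ D := fun _ hz _ =>
  or_iff_right fun hwz => hw (hwz ▸ hz)

lemma IsMinVC.sdiff_union_inter [Finite V] {U : Set V} (hU : ∀ a b, A.Adj a b → a ∈ U → b ∈ U)
    (hC : IsMinVC A C) (hD : IsMinVC A D) : IsMinVC A (C \ U ∪ D ∩ U) := by
  have glue : ∀ {C D : Set V}, IsVC A C → IsVC A D → IsVC A (C \ U ∪ D ∩ U) := by
    intro C D hC hD
    refine isVC_iff_adj.2 fun a b hab => ?_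
    by_cases ha : a ∈ U
    · have hb := hU a b hab ha
      exact (isVC_iff_adj.1 hD a b hab).imp (fun h => Or.inr ⟨h, ha⟩) (fun h => Or.inr ⟨h, hb⟩)
    · have hb : b ∉ U := fun hb => ha (hU b a hab.symm hb)
      exact (isVC_iff_adj.1 hC a b hab).imp (fun h => Or.inl ⟨h, ha⟩) (fun h => Or.inl ⟨h, hb⟩)
  -- The two glued sets have union `C ∪ D` and intersection `C ∩ D`.
  have hsum : (C \ U ∪ D ∩ U).ncard + (D \ U ∪ C ∩ U).ncard = C.ncard + D.ncard := by
    rw [← Set.ncard_union_add_ncard_inter, ← Set.ncard_union_add_ncard_inter C D]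
    congr 2 <;> ext <;> simp <;> tauto
  have := hC.2 _ (glue hD.1 hC.1)
  have := hC.ncard_eq hD
  exact hC.of_ncard_le (glue hC.1 hD.1) (by omega)

lemma exists_isMinVC_superset [Finite V] {S : Set V} (hS : S.Pairwise fun x y => ¬A.Reachable x y)
    (hmem : ∀ x ∈ S, ∃ C, IsMinVC A C ∧ x ∈ C) : ∃ C, IsMinVC A C ∧ S ⊆ C := by
  refine Set.Finite.induction_on_subset (motive := fun T _ => ∃ C, IsMinVC A C ∧ T ⊆ C) S
    S.toFinite ((exists_isMinVC A).imp fun C hC => ⟨hC, Set.empty_subset C⟩) ?_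
  rintro x T hxS hTS hxT ⟨C, hC, hTC⟩
  obtain ⟨D, hD, hxD⟩ := hmem x hxS
  refine ⟨C \ {w | A.Reachable x w} ∪ D ∩ {w | A.Reachable x w},
    hC.sdiff_union_inter (fun a b hab ha => ha.trans hab.reachable) hD, ?_⟩
  exact Set.insert_subset (Or.inr ⟨hxD, .refl x⟩) fun y hy =>
    Or.inl ⟨hTC hy, hS hxS (hTS hy) fun hxy => hxT (hxy ▸ hy)⟩

lemma isVC_insert_of_isVC_deleteIncidenceSet (hD : IsVC (A.deleteIncidenceSet v) D) :
    IsVC A (insert v D) :=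
  isVC_iff_adj.2 fun a b hab => by
    by_cases ha : a = v
    · exact Or.inl (Or.inl ha)
    by_cases hb : b = v
    · exact Or.inr (Or.inl hb)
    exact (isVC_iff_adj.1 hD a b (deleteIncidenceSet_adj.2 ⟨hab, ha, hb⟩)).imp Or.inr Or.inr

lemma isVC_insert_of_neighborSet_subset (hD : IsVC (A.deleteIncidenceSet v) D)
    (hS : A.neighborSet v \ {u} ⊆ D) : IsVC A (insert u D) := by
  have hnbr : ∀ {a b}, A.Adj a b → a = v → b ∈ insert u D := fun {a b} hab ha => by
    by_cases hb : b = u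
    · exact Or.inl hb
    · exact Or.inr (hS ⟨ha ▸ hab, hb⟩)
  refine isVC_iff_adj.2 fun a b hab => ?_
  rcases isVC_iff_adj.1 (isVC_insert_of_isVC_deleteIncidenceSet hD) a b hab with
    (ha | ha) | (hb | hb)
  · exact Or.inr (hnbr hab ha)
  · exact Or.inl (Or.inr ha)
  · exact Or.inl (hnbr hab.symm hb)
  · exact Or.inr (Or.inr hb)

end

namespace SimpleGraph

omit [Fintype V] [DecidableEq V]

variable {A : SimpleGraph V} {C D : Set V} {a b u v w x y z : V}

structure IsLeafAt (A : SimpleGraph V) (u v : V) : Prop where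
  adj : A.Adj u v
  eq_of_adj : ∀ {w}, A.Adj u w → w = v

lemma IsAcyclic.exists_isLeafAt [Finite V] (hA : A.IsAcyclic) (hne : A ≠ ⊥) :
    ∃ u v, A.IsLeafAt u v := by
  obtain ⟨a, b, hab⟩ := ne_bot_iff_exists_adj.1 hne
  have : Nonempty V := ⟨a⟩
  obtain ⟨u, _, p, hp, hmax⟩ := Walk.exists_isPath_forall_isPath_length_le_length A
  have hnil : ¬p.Nil := fun hp0 => by
    simpa [Walk.length_eq_zero_iff.2 hp0] using hmax a b (Walk.cons hab .nil) (by simp [hab.ne])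
  refine ⟨u, p.snd, p.adj_snd hnil, fun {w} huw => hA.eq_snd_of_adj_start hp huw ?_⟩
  by_contra hw
  simpa using hmax _ _ (Walk.cons huw.symm p) (hp.cons hw)

theorem IsAcyclic.leaf_induction [Finite V] {Φ : SimpleGraph V → Prop} (bot : Φ ⊥)
    (step : ∀ A u v, A.IsAcyclic → A.IsLeafAt u v → Φ (A.deleteIncidenceSet v) → Φ A)
    (hA : A.IsAcyclic) : Φ A := by
  induction A using WellFoundedLT.induction with
  | _ A ih =>
  obtain rfl | hne := eq_or_ne A ⊥
  · exact bot
  obtain ⟨u, v, h⟩ := hA.exists_isLeafAt hne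
  refine step A u v hA h (ih _ ((A.deleteIncidenceSet_le v).lt_of_ne fun heq => ?_)
    (hA.anti (A.deleteIncidenceSet_le v)))
  have := heq ▸ h.adj
  exact (deleteIncidenceSet_adj.1 this).2.2 rfl

lemma IsAcyclic.not_reachable_deleteIncidenceSet (hA : A.IsAcyclic) (hx : A.Adj v x)
    (hy : A.Adj v y) (hxy : x ≠ y) : ¬(A.deleteIncidenceSet v).Reachable x y := by
  intro hreach
  apply isAcyclic_iff_forall_adj_isBridge.1 hA hx
  have hle : A.deleteIncidenceSet v ≤ A.deleteEdges {s(v, x)} := fun a b hab => by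
    simp_all [deleteIncidenceSet_adj]
  have hvy : (A.deleteEdges {s(v, x)}).Adj v y := by
    simp [hy, hxy.symm, hx.ne]
  exact hvy.reachable.trans (hreach.mono hle).symm

namespace IsLeafAt

lemma notMem_pair_of_adj (h : A.IsLeafAt u v) (hab : (A.deleteIncidenceSet v).Adj a b) :
    a ∉ ({u, v} : Set V) := by
  obtain ⟨hab, hav, hbv⟩ := deleteIncidenceSet_adj.1 hab
  rintro (rfl | rfl)
  exacts [hbv (h.eq_of_adj hab), hav rfl]

lemma notMem_of_isMinVC [Finite V] (h : A.IsLeafAt u v)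
    (hD : IsMinVC (A.deleteIncidenceSet v) D) (hz : z ∈ ({u, v} : Set V)) : z ∉ D :=
  (mem_negBB_of_isolated fun _ hzw => h.notMem_pair_of_adj hzw hz) D hD

lemma isVC_deleteIncidenceSet_sdiff (h : A.IsLeafAt u v) (hC : IsVC A C) :
    IsVC (A.deleteIncidenceSet v) (C \ {u, v}) :=
  isVC_iff_adj.2 fun a b hab => (isVC_iff_adj.1 hC a b (deleteIncidenceSet_le _ _ hab)).imp
    (fun ha => ⟨ha, h.notMem_pair_of_adj hab⟩) (fun hb => ⟨hb, h.notMem_pair_of_adj hab.symm⟩)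

lemma exists_mem_pair_of_isVC (h : A.IsLeafAt u v) (hC : IsVC A C) :
    ∃ z ∈ ({u, v} : Set V), z ∈ C :=
  (isVC_iff_adj.1 hC u v h.adj).elim (fun hu => ⟨u, .inl rfl, hu⟩) (fun hv => ⟨v, .inr rfl, hv⟩)

lemma ncard_lt_of_isVC [Finite V] (h : A.IsLeafAt u v) (hD : IsMinVC (A.deleteIncidenceSet v) D)
    (hC : IsVC A C) : D.ncard < C.ncard := by
  obtain ⟨z, hz, hzC⟩ := h.exists_mem_pair_of_isVC hC
  calc D.ncard ≤ (C \ {u, v}).ncard := hD.2 _ (h.isVC_deleteIncidenceSet_sdiff hC)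
    _ ≤ (C \ {z}).ncard :=
      Set.ncard_le_ncard (Set.sdiff_subset_sdiff_right (Set.singleton_subset_iff.2 hz))
    _ < C.ncard := Set.ncard_sdiff_singleton_lt_of_mem hzC

lemma isMinVC_insert [Finite V] (h : A.IsLeafAt u v) (hD : IsMinVC (A.deleteIncidenceSet v) D)
    (hz : z ∈ ({u, v} : Set V)) (hC : IsVC A (insert z D)) : IsMinVC A (insert z D) :=
  ⟨hC, fun _ hE => by
    rw [Set.ncard_insert_of_notMem (h.notMem_of_isMinVC hD hz)]
    exact h.ncard_lt_of_isVC hD hE⟩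

lemma isMinVC_insert_right [Finite V] (h : A.IsLeafAt u v)
    (hD : IsMinVC (A.deleteIncidenceSet v) D) : IsMinVC A (insert v D) :=
  h.isMinVC_insert hD (.inr rfl) (isVC_insert_of_isVC_deleteIncidenceSet hD.1)

lemma exists_isMinVC_eq_insert [Finite V] (h : A.IsLeafAt u v) (hC : IsMinVC A C) :
    ∃ z ∈ ({u, v} : Set V), ∃ D, IsMinVC (A.deleteIncidenceSet v) D ∧ C = insert z D := by
  obtain ⟨z, hz, hzC⟩ := h.exists_mem_pair_of_isVC hC.1
  have hD : IsVC (A.deleteIncidenceSet v) (C \ {z}) :=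
    (h.isVC_deleteIncidenceSet_sdiff hC.1).mono
      (Set.sdiff_subset_sdiff_right (Set.singleton_subset_iff.2 hz))
  refine ⟨z, hz, C \ {z}, ⟨hD, fun E hE => ?_⟩, ?_⟩
  · have := hC.2 _ (isVC_insert_of_isVC_deleteIncidenceSet hE)
    have := Set.ncard_insert_le v E
    have := Set.ncard_sdiff_singleton_add_one hzC
    omega
  · rw [Set.insert_sdiff_singleton, Set.insert_eq_of_mem hzC]

lemma exists_isMinVC_iff [Finite V] (h : A.IsLeafAt u v) {Q : Set V → Prop}
    (hQ : ∀ z ∈ ({u, v} : Set V), ∀ D, Q (insert z D) ↔ Q D) :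
    (∃ C, IsMinVC A C ∧ Q C) ↔ ∃ D, IsMinVC (A.deleteIncidenceSet v) D ∧ Q D := by
  constructor
  · rintro ⟨C, hC, hQC⟩
    obtain ⟨z, hz, D, hD, rfl⟩ := h.exists_isMinVC_eq_insert hC
    exact ⟨D, hD, (hQ z hz D).1 hQC⟩
  · rintro ⟨D, hD, hQD⟩
    exact ⟨insert v D, h.isMinVC_insert_right hD, (hQ v (.inr rfl) D).2 hQD⟩

lemma forall_isMinVC_iff [Finite V] (h : A.IsLeafAt u v) {Q : Set V → Prop}
    (hQ : ∀ z ∈ ({u, v} : Set V), ∀ D, Q (insert z D) ↔ Q D) :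
    (∀ C, IsMinVC A C → Q C) ↔ ∀ D, IsMinVC (A.deleteIncidenceSet v) D → Q D := by
  simpa using not_congr (h.exists_isMinVC_iff (Q := fun C => ¬Q C) fun z hz D => (hQ z hz D).not)

lemma mem_posBB_iff [Finite V] (h : A.IsLeafAt u v) (hw : w ∉ ({u, v} : Set V)) :
    w ∈ PosBB A ↔ w ∈ PosBB (A.deleteIncidenceSet v) :=
  h.forall_isMinVC_iff (mem_insert_iff_of_notMem_pair hw)

lemma mem_negBB_iff [Finite V] (h : A.IsLeafAt u v) (hw : w ∉ ({u, v} : Set V)) :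
    w ∈ NegBB A ↔ w ∈ NegBB (A.deleteIncidenceSet v) :=
  h.forall_isMinVC_iff fun z hz D => (mem_insert_iff_of_notMem_pair hw z hz D).not

lemma degen_iff [Finite V] (h : A.IsLeafAt u v) (hw : w ∉ ({u, v} : Set V)) :
    Degen A w ↔ Degen (A.deleteIncidenceSet v) w := by
  rw [_root_.degen_iff, _root_.degen_iff, h.mem_negBB_iff hw, h.mem_posBB_iff hw]

lemma exclusive_iff [Finite V] (h : A.IsLeafAt u v) (hab : (A.deleteIncidenceSet v).Adj a b) :
    Exclusive A s(a, b) ↔ Exclusive (A.deleteIncidenceSet v) s(a, b) := by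
  have ha := h.notMem_pair_of_adj hab
  have hb := h.notMem_pair_of_adj hab.symm
  have hcover := h.forall_isMinVC_iff (Q := fun C => a ∉ C ∨ b ∉ C) fun z hz D =>
    or_congr (mem_insert_iff_of_notMem_pair ha z hz D).not
      (mem_insert_iff_of_notMem_pair hb z hz D).not
  rw [exclusive_mk_iff, exclusive_mk_iff, h.degen_iff ha, h.degen_iff hb, hcover,
    iff_true_intro hab, iff_true_intro (deleteIncidenceSet_le _ _ hab)]

lemma exists_isMinVC_mem_right_notMem_left [Finite V] (h : A.IsLeafAt u v) :
    ∃ C, IsMinVC A C ∧ v ∈ C ∧ u ∉ C := by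
  obtain ⟨D, hD⟩ := exists_isMinVC (A.deleteIncidenceSet v)
  exact ⟨insert v D, h.isMinVC_insert_right hD, .inl rfl,
    fun hu => hu.elim h.adj.ne (h.notMem_of_isMinVC hD (.inl rfl))⟩

lemma notMem_posBB_left [Finite V] (h : A.IsLeafAt u v) : u ∉ PosBB A := fun hu =>
  let ⟨C, hC, _, huC⟩ := h.exists_isMinVC_mem_right_notMem_left
  huC (hu C hC)

lemma notMem_right_of_mem_left [Finite V] (h : A.IsLeafAt u v) (hC : IsMinVC A C) (hu : u ∈ C) :
    v ∉ C := by
  obtain ⟨w, huw, hw⟩ := hC.exists_adj_notMem hu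
  rwa [h.eq_of_adj huw] at hw

lemma mem_negBB_left_of_mem_posBB [Finite V] (h : A.IsLeafAt u v) (hv : v ∈ PosBB A) :
    u ∈ NegBB A :=
  fun C hC hu => h.notMem_right_of_mem_left hC hu (hv C hC)

lemma exclusive_of_notMem_posBB [Finite V] (h : A.IsLeafAt u v) (hv : v ∉ PosBB A) :
    Exclusive A s(u, v) := by
  obtain ⟨C, hC, hvC⟩ : ∃ C, IsMinVC A C ∧ v ∉ C := by simpa [PosBB] using hv
  have huC : u ∈ C := (isVC_iff_adj.1 hC.1 u v h.adj).resolve_right hvC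
  obtain ⟨C', hC', hvC', huC'⟩ := h.exists_isMinVC_mem_right_notMem_left
  exact exclusive_mk_iff.2 ⟨h.adj, ⟨⟨C, hC, huC⟩, ⟨C', hC', huC'⟩⟩, ⟨⟨C', hC', hvC'⟩, ⟨C, hC, hvC⟩⟩,
    fun D hD => imp_iff_not_or.1 (h.notMem_right_of_mem_left hD)⟩

lemma not_exclusive_of_adj_right [Finite V] (h : A.IsLeafAt u v) (hvx : A.Adj v x)
    (hxu : x ≠ u) : ¬Exclusive A s(v, x) := fun he => by
  obtain ⟨-, -, ⟨hxC, -⟩, hcover⟩ := exclusive_mk_iff.1 he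
  have hx : x ∉ ({u, v} : Set V) := by
    rintro (rfl | rfl)
    exacts [hxu rfl, hvx.ne rfl]
  obtain ⟨D, hD, hxD⟩ := (h.exists_isMinVC_iff (mem_insert_iff_of_notMem_pair hx)).1 hxC
  exact (hcover _ (h.isMinVC_insert_right hD)).elim (· (.inl rfl)) (· (.inr hxD))

lemma exclusive_eq_or [Finite V] (h : A.IsLeafAt u v) (he : Exclusive A s(a, b)) :
    s(a, b) = s(u, v) ∨ Exclusive (A.deleteIncidenceSet v) s(a, b) := by
  have hab := (exclusive_mk_iff.1 he).1
  by_cases hav : a = v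
  · subst hav
    by_cases hbu : b = u
    · exact .inl (hbu ▸ Sym2.eq_swap)
    · exact absurd he (h.not_exclusive_of_adj_right hab hbu)
  by_cases hbv : b = v
  · subst hbv
    by_cases hau : a = u
    · exact .inl (hau ▸ rfl)
    · exact absurd (Sym2.eq_swap ▸ he) (h.not_exclusive_of_adj_right hab.symm hau)
  have hab' := deleteIncidenceSet_adj.2 ⟨hab, hav, hbv⟩
  exact .inr ((h.exclusive_iff hab').1 he)

lemma exists_adj_mem_negBB [Finite V] (h : A.IsLeafAt u v) (hA : A.IsAcyclic)
    (hv : v ∈ PosBB A) : ∃ x, A.Adj v x ∧ x ≠ u ∧ x ∈ NegBB (A.deleteIncidenceSet v) := by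
  by_contra! hS
  obtain ⟨D, hD, hSD⟩ := exists_isMinVC_superset (A := A.deleteIncidenceSet v)
    (S := A.neighborSet v \ {u})
    (fun x hx y hy hxy => hA.not_reachable_deleteIncidenceSet hx.1 hy.1 hxy)
    fun x hx => by simpa [NegBB] using hS x hx.1 hx.2
  have hvC := hv _ (h.isMinVC_insert hD (.inl rfl) (isVC_insert_of_neighborSet_subset hD.1 hSD))
  exact hvC.elim h.adj.ne' (h.notMem_of_isMinVC hD (.inr rfl))

lemma exists_exclusive_of_degen [Finite V] (h : A.IsLeafAt u v)
    (ih : ∀ w, Degen (A.deleteIncidenceSet v) w → ∃ x, Exclusive (A.deleteIncidenceSet v) s(w, x))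
    (hw : Degen A w) : ∃ x, Exclusive A s(w, x) := by
  by_cases hwuv : w ∈ ({u, v} : Set V)
  · rcases hwuv with rfl | rfl
    · obtain ⟨C, hC, hwC⟩ := hw.1
      exact ⟨v, h.exclusive_of_notMem_posBB fun hv => h.notMem_right_of_mem_left hC hwC (hv C hC)⟩
    · exact ⟨u, Sym2.eq_swap ▸ h.exclusive_of_notMem_posBB (_root_.degen_iff.1 hw).2⟩
  · obtain ⟨x, hx⟩ := ih w ((h.degen_iff hwuv).1 hw)
    exact ⟨x, (h.exclusive_iff (exclusive_mk_iff.1 hx).1).2 hx⟩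

lemma eq_of_exclusive [Finite V] (h : A.IsLeafAt u v)
    (ih : ∀ w x y, Exclusive (A.deleteIncidenceSet v) s(w, x) →
      Exclusive (A.deleteIncidenceSet v) s(w, y) → x = y)
    (hx : Exclusive A s(w, x)) (hy : Exclusive A s(w, y)) : x = y := by
  have hpair : ∀ {x y}, s(w, x) = s(u, v) → ¬Exclusive (A.deleteIncidenceSet v) s(w, y) :=
    fun hx hy => h.notMem_pair_of_adj (exclusive_mk_iff.1 hy).1
      (Sym2.mem_iff.1 (hx ▸ Sym2.mem_mk_left _ _))
  rcases h.exclusive_eq_or hx with hx' | hx' <;> rcases h.exclusive_eq_or hy with hy' | hy'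
  · exact Sym2.congr_right.1 (hx'.trans hy'.symm)
  · exact absurd hy' (hpair hx')
  · exact absurd hx' (hpair hy')
  · exact ih w x y hx' hy'

lemma two_le_ncard_neighborSet_inter_negBB [Finite V] (h : A.IsLeafAt u v) (hA : A.IsAcyclic)
    (ih : ∀ b ∈ PosBB (A.deleteIncidenceSet v),
      2 ≤ ((A.deleteIncidenceSet v).neighborSet b ∩ NegBB (A.deleteIncidenceSet v)).ncard)
    (hb : b ∈ PosBB A) : 2 ≤ (A.neighborSet b ∩ NegBB A).ncard := by
  by_cases hbv : b = v
  · subst b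
    obtain ⟨x, hvx, hxu, hx⟩ := h.exists_adj_mem_negBB hA hb
    have hxA : x ∈ NegBB A :=
      (h.mem_negBB_iff (by rintro (rfl | rfl); exacts [hxu rfl, hvx.ne rfl])).2 hx
    calc 2 = ({u, x} : Set V).ncard := (Set.ncard_pair hxu.symm).symm
      _ ≤ (A.neighborSet v ∩ NegBB A).ncard := Set.ncard_le_ncard <|
        Set.insert_subset ⟨h.adj.symm, h.mem_negBB_left_of_mem_posBB hb⟩
          (Set.singleton_subset_iff.2 ⟨hvx, hxA⟩)
  · have hbu : b ≠ u := fun hbu => h.notMem_posBB_left (hbu ▸ hb)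
    calc 2 ≤ _ := ih b ((h.mem_posBB_iff (by rintro (rfl | rfl); exacts [hbu rfl, hbv rfl])).1 hb)
      _ ≤ (A.neighborSet b ∩ NegBB A).ncard := Set.ncard_le_ncard fun w ⟨hbw, hw⟩ =>
        ⟨deleteIncidenceSet_le _ _ hbw, (h.mem_negBB_iff (h.notMem_pair_of_adj hbw.symm)).2 hw⟩

end IsLeafAt

theorem IsAcyclic.exists_exclusive_of_degen [Finite V] (hA : A.IsAcyclic) (hw : Degen A w) :
    ∃ x, Exclusive A s(w, x) :=
  leaf_induction (Φ := fun A => ∀ w, Degen A w → ∃ x, Exclusive A s(w, x))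
    (fun _ hw => ((degen_iff.1 hw).1 (mem_negBB_of_isolated fun _ h => h)).elim)
    (fun _ _ _ _ h ih _ => h.exists_exclusive_of_degen ih) hA w hw

theorem IsAcyclic.eq_of_exclusive [Finite V] (hA : A.IsAcyclic) (hx : Exclusive A s(w, x))
    (hy : Exclusive A s(w, y)) : x = y :=
  leaf_induction (Φ := fun A => ∀ w x y, Exclusive A s(w, x) → Exclusive A s(w, y) → x = y)
    (fun _ _ _ hx => ((exclusive_mk_iff.1 hx).1).elim)
    (fun _ _ _ _ h ih _ _ _ => h.eq_of_exclusive ih) hA w x y hx hy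

theorem IsAcyclic.two_le_ncard_neighborSet_inter_negBB [Finite V] (hA : A.IsAcyclic)
    (hb : b ∈ PosBB A) :
    2 ≤ (A.neighborSet b ∩ NegBB A).ncard :=
  leaf_induction (Φ := fun A => ∀ b ∈ PosBB A, 2 ≤ (A.neighborSet b ∩ NegBB A).ncard)
    (fun _ hb => (Set.disjoint_left.1 disjoint_posBB_negBB hb
      (mem_negBB_of_isolated fun _ h => h)).elim)
    (fun _ _ _ hA h ih _ => h.two_le_ncard_neighborSet_inter_negBB hA ih) hA b hb

end SimpleGraph

theorem bColoring_exists (A : SimpleGraph V) (hA : A.IsTree) :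
    IsBColoring A (PosBB A) {e | Exclusive A e} (NegBB A) := by
  have hdegen : ∀ {w}, w ∈ Rsupp {e | Exclusive A e} → Degen A w :=
    fun ⟨_, he, hwe⟩ => he.2.1 _ hwe
  refine ⟨fun _ he => he.1, ?_, disjoint_posBB_negBB,
    Set.disjoint_right.2 fun _ hw => (degen_iff.1 (hdegen hw)).2,
    Set.disjoint_right.2 fun _ hw => (degen_iff.1 (hdegen hw)).1, ?_,
    fun _ _ => mem_posBB_of_adj_of_mem_negBB,
    fun _ hb => hA.isAcyclic.two_le_ncard_neighborSet_inter_negBB hb⟩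
  · refine Set.eq_univ_of_forall fun w => ?_
    by_cases hB : w ∈ PosBB A
    · exact .inl (.inl hB)
    by_cases hG : w ∈ NegBB A
    · exact .inl (.inr hG)
    obtain ⟨x, hx⟩ := hA.isAcyclic.exists_exclusive_of_degen (degen_iff.2 ⟨hG, hB⟩)
    exact .inr ⟨_, hx, Sym2.mem_mk_left w x⟩
  · rintro e he f hf hef w ⟨hwe, hwf⟩
    obtain ⟨x, rfl⟩ := Sym2.mem_iff_exists.1 hwe
    obtain ⟨y, rfl⟩ := Sym2.mem_iff_exists.1 hwf
    exact hef (by rw [hA.isAcyclic.eq_of_exclusive he hf])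
end
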